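/- Let G(1,1;d0,n−d0−2) with 2 ≤ d0 < n−2 be the bipartite graph with U = {u1, u2}, |V1| = d0, |V2| = n−d0−2, where u1 is adjacent to all of V1 ∪ V2 and u2 is adjacent exactly to V1. Then the number of spanning trees of G(1,1;d0,n−d0−2) equals 2^{d0−1} · d0. -/

import Mathlib

/-- The number of spanning trees of a graph: spanning subgraphs whose coercion is a tree. -/
noncomputable def spanningTreeCount {V : Type*} (G : SimpleGraph V) : ℕ :=
  {H : G.Subgraph | H.IsSpanning ∧ H.coe.IsTree}.ncard

/-- The double nested graph `G(1,1; a, b)`: `u₁ = Sum.inl 0` is adjacent to all of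
`V₁ ∪ V₂`, and `u₂ = Sum.inl 1` is adjacent exactly to `V₁` (the `Fin a` part). -/
def DN2 (a b : ℕ) : SimpleGraph (Fin 2 ⊕ (Fin a ⊕ Fin b)) :=
  SimpleGraph.fromRel (fun x y =>
    (∃ v : Fin a ⊕ Fin b, x = Sum.inl 0 ∧ y = Sum.inr v) ∨
    (∃ v : Fin a, x = Sum.inl 1 ∧ y = Sum.inr (Sum.inl v)))

/-!
In a spanning tree of `G(1,1; a, b)` every vertex of `V₂` is a leaf at `u₁` and every vertex
of `V₁` is joined to `u₁` or to `u₂`; connectivity forces some `v₀ ∈ V₁` to be joined to both.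
These edges already form a spanning tree (orient them towards `u₁`: each other vertex gets a
parent of smaller rank), so the tree is exactly this one. It is determined by `v₀` and by the
choice between `u₁` and `u₂` for each vertex of `V₁ ∖ {v₀}`, giving `a · 2^(a-1)` trees.
-/

open Finset SimpleGraph

namespace SimpleGraph

variable {V : Type*}

def parentGraph (r : V) (P : V → V) : SimpleGraph V :=
  fromRel fun x y => x ≠ r ∧ y = P x

section parentGraph

variable {r : V} {P : V → V}

lemma parentGraph_adj {x y : V} :
    (parentGraph r P).Adj x y ↔ x ≠ y ∧ (x ≠ r ∧ y = P x ∨ y ≠ r ∧ x = P y) :=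
  fromRel_adj ..

lemma parentGraph_le_iff {G : SimpleGraph V} :
    parentGraph r P ≤ G ↔ ∀ x, x ≠ r → x ≠ P x → G.Adj x (P x) := by
  refine ⟨fun h x hx hxP => h (parentGraph_adj.mpr ⟨hxP, .inl ⟨hx, rfl⟩⟩), fun h x y hxy => ?_⟩
  obtain ⟨hne, ⟨hx, rfl⟩ | ⟨hy, rfl⟩⟩ := parentGraph_adj.mp hxy
  · exact h x hx hne
  · exact (h y hy hne.symm).symm

variable {rank : V → ℕ} (hP : ∀ x, x ≠ r → rank (P x) < rank x)
include hP

lemma parentGraph_adj_parent {x : V} (hx : x ≠ r) : (parentGraph r P).Adj x (P x) :=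
  parentGraph_adj.mpr ⟨fun h => (hP x hx).ne' (congrArg rank h), .inl ⟨hx, rfl⟩⟩

lemma parentGraph_reachable_root (x : V) : (parentGraph r P).Reachable x r := by
  induction hx : rank x using Nat.strong_induction_on generalizing x with
  | _ n ih =>
    by_cases hxr : x = r
    · exact hxr ▸ .rfl
    exact (parentGraph_adj_parent hP hxr).reachable.trans (ih _ (hx ▸ hP x hxr) _ rfl)

lemma parentGraph_connected : (parentGraph r P).Connected :=
  (connected_iff_exists_forall_reachable _).mpr
    ⟨r, fun x => (parentGraph_reachable_root hP x).symm⟩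

/-- Each edge is `s(x, P x)` for exactly one non-root `x`: the endpoint of larger rank. -/
lemma card_edgeSet_parentGraph :
    Nat.card (parentGraph r P).edgeSet = Nat.card {x // x ≠ r} := by
  refine (Nat.card_eq_of_bijective (fun x => ⟨s(x.1, P x), parentGraph_adj_parent hP x.2⟩)
    ⟨?_, ?_⟩).symm
  · rintro ⟨x, hx⟩ ⟨y, hy⟩ hxy
    rcases Sym2.eq_iff.mp (congrArg Subtype.val hxy) with ⟨h, -⟩ | ⟨hxP, hyP⟩
    · exact Subtype.ext h
    · have h1 := hP x hx
      have h2 := hP y hy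
      dsimp only at hxP hyP
      rw [hyP] at h1
      rw [← hxP] at h2
      omega
  · rintro ⟨e, he⟩
    induction e using Sym2.ind with
    | _ x y =>
      obtain ⟨-, ⟨hx, rfl⟩ | ⟨hy, rfl⟩⟩ := parentGraph_adj.mp ((mem_edgeSet _).mp he)
      · exact ⟨⟨x, hx⟩, rfl⟩
      · exact ⟨⟨y, hy⟩, Subtype.ext Sym2.eq_swap⟩

theorem isTree_parentGraph [Finite V] : (parentGraph r P).IsTree := by
  have := Fintype.ofFinite V
  classical
  refine isTree_iff_connected_and_card.mpr ⟨parentGraph_connected hP, ?_⟩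
  rw [card_edgeSet_parentGraph hP, Nat.card_eq_fintype_card, Nat.card_eq_fintype_card,
    Fintype.card_subtype_compl, Fintype.card_subtype_eq]
  have : 0 < Fintype.card V := Fintype.card_pos_iff.mpr ⟨r⟩
  omega

end parentGraph

lemma Subgraph.IsSpanning.isTree_coe_iff {G : SimpleGraph V} {H : G.Subgraph}
    (hH : H.IsSpanning) :
    H.coe.IsTree ↔ H.spanningCoe.IsTree :=
  (H.spanningCoeEquivCoeOfSpanning hH).isTree_iff.symm

lemma spanningTreeCount_eq_ncard (G : SimpleGraph V) :
    spanningTreeCount G = {T : SimpleGraph V | T ≤ G ∧ T.IsTree}.ncard := by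
  rw [spanningTreeCount, ← Set.InjOn.ncard_image (f := Subgraph.spanningCoe)]
  · congr 1
    ext T
    constructor
    · rintro ⟨H, ⟨hs, ht⟩, rfl⟩
      exact ⟨H.spanningCoe_le, hs.isTree_coe_iff.mp ht⟩
    · rintro ⟨hle, ht⟩
      have hs := toSubgraph.isSpanning T hle
      exact ⟨toSubgraph T hle, ⟨hs, hs.isTree_coe_iff.mpr ht⟩, rfl⟩
  · rintro H₁ ⟨hs₁, -⟩ H₂ ⟨hs₂, -⟩ h
    exact Subgraph.ext (hs₁.verts_eq_univ.trans hs₂.verts_eq_univ.symm)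
      (Subgraph.spanningCoe_inj.mp h)

end SimpleGraph

lemma card_sigma_subtype_eq_true (ι : Type*) [Finite ι] :
    Nat.card (Σ i : ι, {f : ι → Bool // f i = true}) = Nat.card ι * 2 ^ (Nat.card ι - 1) := by
  have := Fintype.ofFinite ι
  classical
  have hfib (i : ι) : #{f : ι → Bool | f i = true} = 2 ^ (Fintype.card ι - 1) := by
    simpa only [Fintype.piFinset_univ, card_univ, Fintype.card_bool] using
      Fintype.card_filter_piFinset_const_eq_of_mem univ i (mem_univ true)
  simp [Nat.card_eq_fintype_card, Fintype.card_sigma, Fintype.card_subtype, hfib]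

instance {α β : Type*} [Nontrivial α] : Nontrivial (α ⊕ β) :=
  Sum.inl_injective.nontrivial

section DN2

variable {a b : ℕ}

lemma DN2_adj_inl_one {y : Fin 2 ⊕ (Fin a ⊕ Fin b)} :
    (DN2 a b).Adj (Sum.inl 1) y ↔ ∃ v, y = Sum.inr (Sum.inl v) := by
  rcases y with i | v | w <;> simp [DN2]

lemma DN2_adj_inr_inl {v : Fin a} {y : Fin 2 ⊕ (Fin a ⊕ Fin b)} :
    (DN2 a b).Adj (Sum.inr (Sum.inl v)) y ↔ y = Sum.inl 0 ∨ y = Sum.inl 1 := by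
  rcases y with i | v | w <;> simp [DN2]

lemma DN2_adj_inr_inr {w : Fin b} {y : Fin 2 ⊕ (Fin a ⊕ Fin b)} :
    (DN2 a b).Adj (Sum.inr (Sum.inr w)) y ↔ y = Sum.inl 0 := by
  rcases y with i | v | w <;> simp [DN2]

/-- `u₁ = inl 0` is the root; `v₀` is joined to both `u₁` and `u₂`, and any other `v ∈ V₁`
hangs from `u₁` if `f v` and from `u₂` otherwise. -/
def dn2Parent (v₀ : Fin a) (f : Fin a → Bool) :
    Fin 2 ⊕ (Fin a ⊕ Fin b) → Fin 2 ⊕ (Fin a ⊕ Fin b)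
  | .inl 0 => .inl 0
  | .inl 1 => .inr (.inl v₀)
  | .inr (.inl v) => if f v then .inl 0 else .inl 1
  | .inr (.inr _) => .inl 0

def dn2Rank (f : Fin a → Bool) : Fin 2 ⊕ (Fin a ⊕ Fin b) → ℕ
  | .inl 0 => 0
  | .inl 1 => 2
  | .inr (.inl v) => if f v then 1 else 3
  | .inr (.inr _) => 1

lemma dn2Rank_parent_lt {v₀ : Fin a} {f : Fin a → Bool} (hf : f v₀ = true)
    (x : Fin 2 ⊕ (Fin a ⊕ Fin b)) (hx : x ≠ .inl 0) :
    dn2Rank f (dn2Parent v₀ f x) < dn2Rank f x := by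
  rcases x with i | v | w
  · fin_cases i
    · exact absurd rfl hx
    · simp [dn2Parent, dn2Rank, hf]
  · cases hv : f v <;> simp [dn2Parent, dn2Rank, hv]
  · simp [dn2Parent, dn2Rank]

def dn2Tree (v₀ : Fin a) (f : Fin a → Bool) : SimpleGraph (Fin 2 ⊕ (Fin a ⊕ Fin b)) :=
  parentGraph (.inl 0) (dn2Parent v₀ f)

lemma isTree_dn2Tree {v₀ : Fin a} {f : Fin a → Bool} (hf : f v₀ = true) :
    (dn2Tree (b := b) v₀ f).IsTree :=
  isTree_parentGraph (dn2Rank_parent_lt hf)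

lemma dn2Tree_le (v₀ : Fin a) (f : Fin a → Bool) : dn2Tree v₀ f ≤ DN2 a b := by
  refine parentGraph_le_iff.mpr ?_
  rintro (i | v | w) hx -
  · fin_cases i
    · exact absurd rfl hx
    · exact DN2_adj_inl_one.mpr ⟨v₀, rfl⟩
  · cases f v <;> simp [dn2Parent, DN2_adj_inr_inl]
  · simp [dn2Parent, DN2_adj_inr_inr]

lemma dn2Tree_adj_inl_zero {v₀ v : Fin a} {f : Fin a → Bool} :
    (dn2Tree (b := b) v₀ f).Adj (.inl 0) (.inr (.inl v)) ↔ f v = true := by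
  cases hv : f v <;> simp [dn2Tree, parentGraph_adj, dn2Parent, hv]

lemma dn2Tree_adj_inl_one {v₀ v : Fin a} {f : Fin a → Bool} :
    (dn2Tree (b := b) v₀ f).Adj (.inl 1) (.inr (.inl v)) ↔ v = v₀ ∨ f v = false := by
  cases hv : f v <;> simp [dn2Tree, parentGraph_adj, dn2Parent, hv, eq_comm]

lemma dn2Tree_injective :
    Function.Injective fun p : Σ v₀ : Fin a, {f : Fin a → Bool // f v₀ = true} =>
      dn2Tree (b := b) p.1 p.2 := by
  rintro ⟨v₀, f, hf⟩ ⟨v₀', f', _⟩ h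
  dsimp only at h
  obtain rfl : f = f' := funext fun v => Bool.eq_iff_iff.mpr <| by
    rw [← dn2Tree_adj_inl_zero (b := b) (v₀ := v₀), ← dn2Tree_adj_inl_zero (v₀ := v₀'), h]
  have h₁ := dn2Tree_adj_inl_one (b := b) (f := f) (v₀ := v₀') (v := v₀)
  rw [← h, dn2Tree_adj_inl_one, hf] at h₁
  obtain rfl : v₀ = v₀' := by simpa using h₁
  rfl

variable {T : SimpleGraph (Fin 2 ⊕ (Fin a ⊕ Fin b))}

/-- Leaving the set of `u₂` and its `T`-neighbours, a walk from `u₂` to `u₁` passes through a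
vertex of `V₁` joined to both. -/
lemma exists_adj_inl_zero_and_inl_one (hT : T.Connected) (hle : T ≤ DN2 a b) :
    ∃ v₀, T.Adj (.inl 0) (.inr (.inl v₀)) ∧ T.Adj (.inl 1) (.inr (.inl v₀)) := by
  let S : Set (Fin 2 ⊕ (Fin a ⊕ Fin b)) := {x | x = .inl 1 ∨ T.Adj (.inl 1) x}
  obtain ⟨p⟩ := hT.preconnected (.inl 1) (.inl 0)
  obtain ⟨⟨⟨x, y⟩, hxy⟩, -, hx, hy⟩ := p.exists_boundary_dart S (.inl rfl)
    (by simpa [S] using fun h => by simpa using DN2_adj_inl_one.mp (hle h))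
  simp only [S, Set.mem_ofPred_eq, not_or] at hx hy
  rcases hx with rfl | hx
  · exact absurd hxy hy.2
  · obtain ⟨v, rfl⟩ := DN2_adj_inl_one.mp (hle hx)
    rcases DN2_adj_inr_inl.mp (hle hxy) with rfl | rfl
    · exact ⟨v, hxy.symm, hx⟩
    · exact absurd rfl hy.1

lemma adj_inl_zero_or_inl_one (hT : T.Connected) (hle : T ≤ DN2 a b) (v : Fin a) :
    T.Adj (.inl 0) (.inr (.inl v)) ∨ T.Adj (.inl 1) (.inr (.inl v)) := by
  obtain ⟨y, hy⟩ := hT.preconnected.exists_adj_of_nontrivial (.inr (.inl v))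
  rcases DN2_adj_inr_inl.mp (hle hy) with rfl | rfl
  · exact .inl hy.symm
  · exact .inr hy.symm

lemma adj_inl_zero_inr_inr (hT : T.Connected) (hle : T ≤ DN2 a b) (w : Fin b) :
    T.Adj (.inl 0) (.inr (.inr w)) := by
  obtain ⟨y, hy⟩ := hT.preconnected.exists_adj_of_nontrivial (.inr (.inr w))
  obtain rfl := DN2_adj_inr_inr.mp (hle hy)
  exact hy.symm

/-- A tree contains no other connected spanning subgraph, so it suffices that `T`
contains `dn2Tree v₀ f`. -/
lemma exists_dn2Tree_eq (hT : T.IsTree) (hle : T ≤ DN2 a b) :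
    ∃ v₀ f, f v₀ = true ∧ dn2Tree v₀ f = T := by
  classical
  obtain ⟨v₀, h₀, h₁⟩ := exists_adj_inl_zero_and_inl_one hT.connected hle
  let f v := decide (T.Adj (.inl 0) (.inr (.inl v)))
  have hf : f v₀ = true := decide_eq_true h₀
  refine ⟨v₀, f, hf, (isTree_iff_minimal_connected.mp hT).eq_of_le
    (isTree_dn2Tree hf).connected (parentGraph_le_iff.mpr ?_)⟩
  rintro (i | v | w) hx -
  · fin_cases i
    · exact absurd rfl hx
    · exact h₁
  · by_cases hv : T.Adj (.inl 0) (.inr (.inl v))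
    · simpa [dn2Parent, f, hv] using hv.symm
    · simpa [dn2Parent, f, hv] using
        ((adj_inl_zero_or_inl_one hT.connected hle v).resolve_left hv).symm
  · exact (adj_inl_zero_inr_inr hT.connected hle w).symm

theorem spanningTreeCount_DN2 (a b : ℕ) : spanningTreeCount (DN2 a b) = 2 ^ (a - 1) * a := by
  have htrees : {T | T ≤ DN2 a b ∧ T.IsTree} =
      Set.range fun p : Σ v₀ : Fin a, {f : Fin a → Bool // f v₀ = true} => dn2Tree p.1 p.2 := by
    ext T
    constructor
    · rintro ⟨hle, hT⟩
      obtain ⟨v₀, f, hf, rfl⟩ := exists_dn2Tree_eq hT hle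
      exact ⟨⟨v₀, f, hf⟩, rfl⟩
    · rintro ⟨⟨v₀, f, hf⟩, rfl⟩
      exact ⟨dn2Tree_le v₀ f, isTree_dn2Tree hf⟩
  rw [spanningTreeCount_eq_ncard, htrees, Set.ncard_range_of_injective dn2Tree_injective,
    card_sigma_subtype_eq_true, Nat.card_fin, mul_comm]

end DN2

theorem spanningTreeCount_DN2_quasiTree_general (n d0 : ℕ) :
    spanningTreeCount (DN2 d0 (n - d0 - 2)) = 2 ^ (d0 - 1) * d0 :=
  spanningTreeCount_DN2 d0 (n - d0 - 2)

/-- The quasi-tree graph `G(1,1; d₀, n-d₀-2)` with `2 ≤ d₀ < n-2` has exactly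
`2^(d₀-1) * d₀` spanning trees. -/
theorem spanningTreeCount_DN2_quasiTree (n d0 : ℕ) (h1 : 2 ≤ d0) (h2 : d0 < n - 2) :
    spanningTreeCount (DN2 d0 (n - d0 - 2)) = 2 ^ (d0 - 1) * d0 :=
  spanningTreeCount_DN2_quasiTree_general n d0
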